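/- arXiv:1203.3773 — 6 statements merged into one kernel-verified Lean document; each statement's English description precedes it below -/
import Mathlib

section
/- Let A be a d×d real matrix with tr A = 0 and let f : ℝ^d → ℝ be continuously differentiable. Define ρ : ℝ^d × ℝ^d → ℝ by ρ(q,v) = f(v − A q). Then ρ is a stationary solution of the Liouville equation of the dynamics dq/dt = v, dv/dt = A v: for every (q,v) ∈ ℝ^d × ℝ^d, ∑_{i=1}^d ∂/∂q_i (v_i ρ(q,v)) + ∑_{i=1}^d ∂/∂v_i ((A v)_i ρ(q,v)) = 0. -/
/-!
Both sums are divergences of vector fields of the form `φ • X`, whose divergence is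
`dφ(X) + φ · div X`. With `φ = f (v - A q)`: in `q` the field is `φ • v`, contributing
`dφ_q(v) = -df(A v)`; in `v` it is `φ • A v`, contributing
`dφ_v(A v) + φ · tr A = df(A v) + φ · tr A`.
The `df(A v)` terms cancel and `tr A = 0` kills the rest.
-/

/-- The partial derivative of `g : ℝ^d → ℝ` at `x` with respect to the `i`-th coordinate. -/
noncomputable def partialDeriv' {d : ℕ} (i : Fin d) (g : (Fin d → ℝ) → ℝ)
    (x : Fin d → ℝ) : ℝ :=
  deriv (fun t => g (Function.update x i t)) (x i)

open Matrix

noncomputable def divergence {d : ℕ} (F : (Fin d → ℝ) → Fin d → ℝ) (x : Fin d → ℝ) : ℝ :=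
  ∑ i, partialDeriv' i (fun y => F y i) x

section

variable {d : ℕ} {x : Fin d → ℝ}

theorem partialDeriv'_eq_fderiv {g : (Fin d → ℝ) → ℝ} (hg : DifferentiableAt ℝ g x)
    (i : Fin d) : partialDeriv' i g x = fderiv ℝ g x (Pi.single i 1) := by
  have hg' : HasFDerivAt g (fderiv ℝ g x) (Function.update x i (x i)) := by
    simpa using hg.hasFDerivAt
  exact (hg'.comp_hasDerivAt (x i) (hasDerivAt_update x i (x i))).deriv

theorem divergence_eq_trace_fderiv {F : (Fin d → ℝ) → Fin d → ℝ}
    (hF : DifferentiableAt ℝ F x) :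
    divergence F x = LinearMap.trace ℝ _ (fderiv ℝ F x : (Fin d → ℝ) →ₗ[ℝ] Fin d → ℝ) := by
  rw [← toLin'_toMatrix' (fderiv ℝ F x : (Fin d → ℝ) →ₗ[ℝ] Fin d → ℝ),
    trace_toLin'_eq]
  refine Finset.sum_congr rfl fun i _ => ?_
  rw [partialDeriv'_eq_fderiv (differentiableAt_pi.1 hF i),
    (hasFDerivAt_pi'.1 hF.hasFDerivAt i).fderiv]
  rfl

theorem divergence_smul {φ : (Fin d → ℝ) → ℝ} {X : (Fin d → ℝ) → Fin d → ℝ}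
    (hφ : DifferentiableAt ℝ φ x) (hX : DifferentiableAt ℝ X x) :
    divergence (fun y => φ y • X y) x = fderiv ℝ φ x (X x) + φ x * divergence X x := by
  rw [divergence_eq_trace_fderiv (F := fun y => φ y • X y) (hφ.smul hX),
    divergence_eq_trace_fderiv hX, fderiv_fun_smul hφ hX]
  simp [add_comm]

theorem divergence_const (c : Fin d → ℝ) : divergence (fun _ => c) x = 0 := by
  simp [divergence_eq_trace_fderiv (differentiableAt_const c)]

theorem hasFDerivAt_mulVec (A : Matrix (Fin d) (Fin d) ℝ) :
    HasFDerivAt (A *ᵥ ·) (LinearMap.toContinuousLinearMap (toLin' A)) x :=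
  (LinearMap.toContinuousLinearMap (toLin' A)).hasFDerivAt

theorem divergence_mulVec (A : Matrix (Fin d) (Fin d) ℝ) : divergence (A *ᵥ ·) x = A.trace := by
  rw [divergence_eq_trace_fderiv (hasFDerivAt_mulVec A).differentiableAt,
    (hasFDerivAt_mulVec A).fderiv]
  exact trace_toLin'_eq A

theorem sum_partialDeriv'_mul_eq_divergence (φ : (Fin d → ℝ) → ℝ)
    (X : (Fin d → ℝ) → Fin d → ℝ) :
    ∑ i, partialDeriv' i (fun y => X y i * φ y) x = divergence (fun y => φ y • X y) x := by
  simp only [divergence, Pi.smul_apply, smul_eq_mul, mul_comm]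

end

theorem liouville_stationary_linear_background_flow_general
    (d : ℕ)
    (A : Matrix (Fin d) (Fin d) ℝ) (hA : A.trace = 0)
    (f : (Fin d → ℝ) → ℝ) (hf : ContDiff ℝ 1 f) :
    ∀ q v : Fin d → ℝ,
      (∑ i, partialDeriv' i (fun q' => v i * f (v - A.mulVec q')) q) +
      (∑ i, partialDeriv' i (fun v' => A.mulVec v' i * f (v' - A.mulVec q)) v) = 0 := by
  intro q v
  have hL : HasFDerivAt f (fderiv ℝ f (v - A *ᵥ q)) (v - A *ᵥ q) :=
    ((hf.differentiable one_ne_zero) _).hasFDerivAt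
  have hρq : HasFDerivAt (fun q' => f (v - A *ᵥ q')) _ q :=
    hL.comp q ((hasFDerivAt_mulVec A).const_sub v)
  have hρv : HasFDerivAt (fun v' => f (v' - A *ᵥ q)) _ v :=
    hL.comp v ((hasFDerivAt_id v).sub_const (A *ᵥ q))
  have hq : ∑ i, partialDeriv' i (fun q' => v i * f (v - A *ᵥ q')) q
      = -fderiv ℝ f (v - A *ᵥ q) (A *ᵥ v) := by
    rw [sum_partialDeriv'_mul_eq_divergence (fun q' => f (v - A *ᵥ q')) (fun _ => v),
      divergence_smul hρq.differentiableAt (differentiableAt_const v), divergence_const,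
      hρq.fderiv]
    simp
  have hv : ∑ i, partialDeriv' i (fun v' => (A *ᵥ v') i * f (v' - A *ᵥ q)) v
      = fderiv ℝ f (v - A *ᵥ q) (A *ᵥ v) + f (v - A *ᵥ q) * A.trace := by
    rw [sum_partialDeriv'_mul_eq_divergence (fun v' => f (v' - A *ᵥ q)) (A *ᵥ ·),
      divergence_smul hρv.differentiableAt (hasFDerivAt_mulVec A).differentiableAt,
      divergence_mulVec, hρv.fderiv]
    simp
  rw [hq, hv, hA]
  ring

/-- If `tr A = 0`, then `ρ(q,v) = f(v − A q)` is a stationary solution of the Liouville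
equation of the dynamics `dq/dt = v`, `dv/dt = A v`:
`∑ᵢ ∂/∂qᵢ (vᵢ ρ) + ∑ᵢ ∂/∂vᵢ ((A v)ᵢ ρ) = 0`. -/
theorem liouville_stationary_linear_background_flow
    (d : ℕ) (hd : 1 ≤ d)
    (A : Matrix (Fin d) (Fin d) ℝ) (hA : A.trace = 0)
    (f : (Fin d → ℝ) → ℝ) (hf : ContDiff ℝ 1 f) :
    ∀ q v : Fin d → ℝ,
      (∑ i, partialDeriv' i (fun q' => v i * f (v - A.mulVec q')) q) +
      (∑ i, partialDeriv' i (fun v' => A.mulVec v' i * f (v' - A.mulVec q)) v) = 0 :=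
  liouville_stationary_linear_background_flow_general d A hA f hf
end

section
/- Let u : ℝ^d → ℝ^d be continuously differentiable and divergence-free (∑_{i=1}^d ∂u_i/∂q_i (q) = 0 for all q), and let f : ℝ^d → ℝ be continuously differentiable. Define ρ(q,v) = f(v − u(q)). Then for every (q,v) ∈ ℝ^d × ℝ^d, ∑_{i=1}^d ∂/∂q_i (v_i ρ(q,v)) + ∑_{i=1}^d ∂/∂v_i ((∇u(q) v)_i ρ(q,v)) = 0, where ∇u(q) denotes the Jacobian matrix of u at q; that is, ρ is a stationary solution of the Liouville equation of the dynamics dq/dt = v, dv/dt = ∇u(q) v. -/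
theorem sum_mul_apply_single {ι : Type*} [Fintype ι] [DecidableEq ι]
    (L : (ι → ℝ) →L[ℝ] ℝ) (z : ι → ℝ) :
    ∑ i, z i * L (Pi.single i 1) = L z := by
  conv_rhs => rw [← (Pi.basisFun ℝ ι).sum_repr z]
  simp [map_sum]

section PartialDeriv

variable {d : ℕ}

theorem partialDeriv'_eq_of_hasFDerivAt (i : Fin d) {g : (Fin d → ℝ) → ℝ}
    {x : Fin d → ℝ} {L : (Fin d → ℝ) →L[ℝ] ℝ} (hg : HasFDerivAt g L x) :
    partialDeriv' i g x = L (Pi.single i 1) := by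
  rw [← Function.update_eq_self i x] at hg
  exact (hg.comp_hasDerivAt (x i) (hasDerivAt_update x i (x i))).deriv

theorem sum_partialDeriv'_const_mul {g : (Fin d → ℝ) → ℝ} {x : Fin d → ℝ}
    {L : (Fin d → ℝ) →L[ℝ] ℝ} (hg : HasFDerivAt g L x) (v : Fin d → ℝ) :
    ∑ i, partialDeriv' i (fun x' => v i * g x') x = L v := by
  simp_rw [partialDeriv'_eq_of_hasFDerivAt _ (hg.const_mul _)]
  simpa using sum_mul_apply_single L v

theorem sum_partialDeriv'_linear_mul {g : (Fin d → ℝ) → ℝ} {x : Fin d → ℝ}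
    {L : (Fin d → ℝ) →L[ℝ] ℝ} (hg : HasFDerivAt g L x)
    (A : (Fin d → ℝ) →L[ℝ] (Fin d → ℝ)) :
    ∑ i, partialDeriv' i (fun x' => A x' i * g x') x
      = (∑ i, A (Pi.single i 1) i) * g x + L (A x) := by
  have hA (i : Fin d) : HasFDerivAt (fun x' => A x' i) ((ContinuousLinearMap.proj i).comp A) x :=
    ((ContinuousLinearMap.proj i).comp A).hasFDerivAt
  simp only [partialDeriv'_eq_of_hasFDerivAt _ ((hA _).fun_mul hg), add_apply, smul_apply,
    ContinuousLinearMap.comp_apply, ContinuousLinearMap.proj_apply, smul_eq_mul,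
    Finset.sum_add_distrib, ← Finset.mul_sum, sum_mul_apply_single]
  ring

end PartialDeriv

theorem liouville_stationary_incompressible_background_flow_general
    (d : ℕ)
    (u : (Fin d → ℝ) → Fin d → ℝ) (hu : ContDiff ℝ 1 u)
    (hdiv : ∀ q : Fin d → ℝ, (∑ i, fderiv ℝ (fun q' => u q' i) q (Pi.single i 1)) = 0)
    (f : (Fin d → ℝ) → ℝ) (hf : ContDiff ℝ 1 f) :
    ∀ q v : Fin d → ℝ,
      (∑ i, partialDeriv' i (fun q' => v i * f (v - u q')) q) +
      (∑ i, partialDeriv' i (fun v' => (fderiv ℝ u q v') i * f (v' - u q)) v) = 0 := by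
  intro q v
  have hud : DifferentiableAt ℝ u q := hu.differentiable one_ne_zero q
  have hfd : DifferentiableAt ℝ f (v - u q) := hf.differentiable one_ne_zero _
  have hρq : HasFDerivAt (fun q' => f (v - u q'))
      ((fderiv ℝ f (v - u q)).comp (-fderiv ℝ u q)) q :=
    hfd.hasFDerivAt.comp q (hud.hasFDerivAt.const_sub v)
  have hρv : HasFDerivAt (fun v' => f (v' - u q)) (fderiv ℝ f (v - u q)) v :=
    hfd.hasFDerivAt.comp v ((hasFDerivAt_id v).sub_const (u q))
  have htrace : ∑ i, fderiv ℝ u q (Pi.single i 1) i = 0 := by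
    simpa [fderiv_apply hud] using hdiv q
  rw [sum_partialDeriv'_const_mul hρq, sum_partialDeriv'_linear_mul hρv, htrace]
  simp

/-- If `u` is a `C¹` divergence-free vector field, then `ρ(q,v) = f(v − u(q))` is a
stationary solution of the Liouville equation of the dynamics `dq/dt = v`,
`dv/dt = ∇u(q) v`: `∑ᵢ ∂/∂qᵢ (vᵢ ρ) + ∑ᵢ ∂/∂vᵢ ((∇u(q) v)ᵢ ρ) = 0`, where the Jacobian
`∇u(q)` applied to `v` is the directional derivative `fderiv ℝ u q v`. -/
theorem liouville_stationary_incompressible_background_flow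
    (d : ℕ) (hd : 1 ≤ d)
    (u : (Fin d → ℝ) → Fin d → ℝ) (hu : ContDiff ℝ 1 u)
    (hdiv : ∀ q : Fin d → ℝ, (∑ i, fderiv ℝ (fun q' => u q' i) q (Pi.single i 1)) = 0)
    (f : (Fin d → ℝ) → ℝ) (hf : ContDiff ℝ 1 f) :
    ∀ q v : Fin d → ℝ,
      (∑ i, partialDeriv' i (fun q' => v i * f (v - u q')) q) +
      (∑ i, partialDeriv' i (fun v' => (fderiv ℝ u q v') i * f (v' - u q)) v) = 0 :=
  liouville_stationary_incompressible_background_flow_general d u hu hdiv f hf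
end

section
/- Let d ≥ 1, let A be a d×d real matrix with tr A = 0, and let M, β, γ, σ > 0 satisfy the fluctuation–dissipation relation γ = σ² β / 2. Define ρ : ℝ^d × ℝ^d → ℝ by ρ(Q,V) = exp(−(β M / 2) |V − A Q|²). Then ρ is a stationary solution of the Fokker–Planck equation associated with the dynamics dQ = V dt, M dV = M A V dt − γ (V − A Q) dt + σ dW: for every (Q,V) ∈ ℝ^d × ℝ^d, ∑_{i=1}^d ∂/∂Q_i (V_i ρ) + ∑_{i=1}^d ∂/∂V_i ( [ (A V)_i − (γ/M)(V − A Q)_i ] ρ ) = (σ²/(2M²)) ∑_{i=1}^d ∂²ρ/∂V_i². -/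
/-!
Along a coordinate line, `ρ = exp(-c|u|²)` with `u = V - AQ` and `c = βM/2` is the exponential
of a quadratic polynomial, so every partial derivative is explicit. The transport term gives
`2c⟨u, AV⟩ρ`, which cancels against the `AV` part of the drift; `tr A = 0` kills the divergence
of `AV`, and the rest of the drift term is `(γ/M)(2c|u|² - d)ρ`. Since `Δ_V ρ = 2c(2c|u|² - d)ρ`,
both sides agree exactly when `γ/M = 2c · σ²/(2M²)`, which is the fluctuation–dissipation relation.
-/

open Matrix Function

section Lines

variable {d : ℕ}

theorem update_eq_add_smul_single (x : Fin d → ℝ) (i : Fin d) (t : ℝ) :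
    update x i t = x + (t - x i) • Pi.single i 1 := by
  ext j
  rcases eq_or_ne j i with rfl | h
  · simp
  · simp [h]

theorem mulVec_update (A : Matrix (Fin d) (Fin d) ℝ) (x : Fin d → ℝ) (i : Fin d) (t : ℝ) :
    A *ᵥ update x i t = A *ᵥ x + (t - x i) • A.col i := by
  rw [update_eq_add_smul_single, mulVec_add, mulVec_smul, mulVec_single_one]

theorem hasDerivAt_affine_mul_exp_neg_dotProduct_self (p q c : ℝ) (a w : Fin d → ℝ) (t₀ : ℝ) :
    HasDerivAt (fun t => (p + (t - t₀) * q) *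
        Real.exp (-c * ((a + (t - t₀) • w) ⬝ᵥ (a + (t - t₀) • w))))
      ((q - 2 * c * p * (a ⬝ᵥ w)) * Real.exp (-c * (a ⬝ᵥ a))) t₀ := by
  have hquad : ∀ t, (a + (t - t₀) • w) ⬝ᵥ (a + (t - t₀) • w)
      = a ⬝ᵥ a + (2 * (a ⬝ᵥ w)) * (t - t₀) + (w ⬝ᵥ w) * (t - t₀) ^ 2 := by
    intro t
    simp only [add_dotProduct, dotProduct_add, smul_dotProduct, dotProduct_smul, smul_eq_mul,
      dotProduct_comm w a]
    ring
  simp_rw [hquad]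
  have hs : HasDerivAt (fun t : ℝ => t - t₀) 1 t₀ := (hasDerivAt_id t₀).sub_const t₀
  have hP : HasDerivAt (fun t => p + (t - t₀) * q) q t₀ := by
    simpa using (hs.mul_const q).const_add p
  have hE : HasDerivAt
      (fun t => -c * (a ⬝ᵥ a + (2 * (a ⬝ᵥ w)) * (t - t₀) + (w ⬝ᵥ w) * (t - t₀) ^ 2))
      (-c * (2 * (a ⬝ᵥ w))) t₀ := by
    simpa using (((hs.const_mul (2 * (a ⬝ᵥ w))).const_add (a ⬝ᵥ a)).add
      ((hs.pow 2).const_mul (w ⬝ᵥ w))).const_mul (-c)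
  refine (hP.fun_mul hE.exp).congr_deriv ?_
  simp only [sub_self, zero_mul, mul_zero, add_zero, zero_pow two_ne_zero]
  ring

theorem partialDeriv'_mul_exp_neg_dotProduct_self {P : (Fin d → ℝ) → ℝ}
    {u : (Fin d → ℝ) → Fin d → ℝ} {x : Fin d → ℝ} {i : Fin d} (c q : ℝ) (w : Fin d → ℝ)
    (hP : ∀ t, P (update x i t) = P x + (t - x i) * q)
    (hu : ∀ t, u (update x i t) = u x + (t - x i) • w) :
    partialDeriv' i (fun y => P y * Real.exp (-c * (u y ⬝ᵥ u y))) x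
      = (q - 2 * c * P x * (u x ⬝ᵥ w)) * Real.exp (-c * (u x ⬝ᵥ u x)) := by
  unfold partialDeriv'
  simp_rw [hP, hu]
  exact (hasDerivAt_affine_mul_exp_neg_dotProduct_self _ _ _ _ _ _).deriv

end Lines

section Density

variable {d : ℕ} (A : Matrix (Fin d) (Fin d) ℝ) (c : ℝ)

noncomputable def gaussianDensity (Q V : Fin d → ℝ) : ℝ :=
  Real.exp (-c * ((V - A *ᵥ Q) ⬝ᵥ (V - A *ᵥ Q)))

theorem partialDeriv'_const_mul_gaussianDensity_fst (s : ℝ) (Q V : Fin d → ℝ) (i : Fin d) :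
    partialDeriv' i (fun Q' => s * gaussianDensity A c Q' V) Q
      = 2 * c * s * ((V - A *ᵥ Q) ᵥ* A) i * gaussianDensity A c Q V := by
  have h := partialDeriv'_mul_exp_neg_dotProduct_self (P := fun _ => s)
    (u := fun Q' => V - A *ᵥ Q') (x := Q) (i := i) c 0 (-A.col i) (fun t => by ring)
    (fun t => by rw [mulVec_update]; module)
  simp only [gaussianDensity]
  rw [h, dotProduct_neg]
  change _ = 2 * c * s * ((V - A *ᵥ Q) ⬝ᵥ A.col i) * _
  ring

theorem partialDeriv'_mul_gaussianDensity_snd {P : (Fin d → ℝ) → ℝ} (q : ℝ) (Q V : Fin d → ℝ)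
    (i : Fin d) (hP : ∀ t, P (update V i t) = P V + (t - V i) * q) :
    partialDeriv' i (fun V' => P V' * gaussianDensity A c Q V') V
      = (q - 2 * c * P V * (V - A *ᵥ Q) i) * gaussianDensity A c Q V := by
  have h := partialDeriv'_mul_exp_neg_dotProduct_self (u := fun V' => V' - A *ᵥ Q) c q
    (Pi.single i 1) hP (fun t => by rw [update_eq_add_smul_single]; abel)
  simpa only [gaussianDensity, dotProduct_single_one] using h

theorem partialDeriv'_gaussianDensity_snd (Q V : Fin d → ℝ) (i : Fin d) :
    partialDeriv' i (gaussianDensity A c Q) V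
      = -2 * c * (V - A *ᵥ Q) i * gaussianDensity A c Q V := by
  simpa using partialDeriv'_mul_gaussianDensity_snd A c (P := fun _ => 1) 0 Q V i (by simp)

theorem sum_partialDeriv'_transport (Q V : Fin d → ℝ) :
    ∑ i, partialDeriv' i (fun Q' => V i * gaussianDensity A c Q' V) Q
      = 2 * c * ((V - A *ᵥ Q) ⬝ᵥ A *ᵥ V) * gaussianDensity A c Q V := by
  simp_rw [partialDeriv'_const_mul_gaussianDensity_fst, dotProduct_mulVec, dotProduct,
    Finset.mul_sum, Finset.sum_mul]
  exact Finset.sum_congr rfl fun i _ => by ring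

theorem sum_partialDeriv'_drift (κ : ℝ) (Q V : Fin d → ℝ) :
    ∑ i, partialDeriv' i
        (fun V' => ((A *ᵥ V') i - κ * (V' i - (A *ᵥ Q) i)) * gaussianDensity A c Q V') V
      = (A.trace - d * κ - 2 * c * ((A *ᵥ V - κ • (V - A *ᵥ Q)) ⬝ᵥ (V - A *ᵥ Q)))
          * gaussianDensity A c Q V := by
  have h : ∀ i, partialDeriv' i
        (fun V' => ((A *ᵥ V') i - κ * (V' i - (A *ᵥ Q) i)) * gaussianDensity A c Q V') V
      = (A i i - κ - 2 * c * ((A *ᵥ V) i - κ * (V i - (A *ᵥ Q) i)) * (V - A *ᵥ Q) i)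
          * gaussianDensity A c Q V := fun i =>
    partialDeriv'_mul_gaussianDensity_snd A c _ Q V i fun t => by
      simp only [mulVec_update, update_self, Pi.add_apply, Pi.smul_apply, smul_eq_mul, col_apply]
      ring
  simp only [h, ← Finset.sum_mul, Finset.sum_sub_distrib, trace, diag, dotProduct,
    Finset.sum_const, Finset.card_univ, Fintype.card_fin, nsmul_eq_mul, Finset.mul_sum,
    Pi.sub_apply, Pi.smul_apply, smul_eq_mul]
  congr 1
  simp only [sub_right_inj]
  exact Finset.sum_congr rfl fun i _ => by ring

theorem sum_partialDeriv'_partialDeriv'_gaussianDensity_snd (Q V : Fin d → ℝ) :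
    ∑ i, partialDeriv' i (fun V' => partialDeriv' i (gaussianDensity A c Q) V') V
      = 2 * c * (2 * c * ((V - A *ᵥ Q) ⬝ᵥ (V - A *ᵥ Q)) - d) * gaussianDensity A c Q V := by
  have h : ∀ i, partialDeriv' i (fun V' => partialDeriv' i (gaussianDensity A c Q) V') V
      = 2 * c * (2 * c * ((V - A *ᵥ Q) i * (V - A *ᵥ Q) i) - 1)
          * gaussianDensity A c Q V := fun i => by
    simp_rw [partialDeriv'_gaussianDensity_snd]
    rw [partialDeriv'_mul_gaussianDensity_snd A c (-2 * c) Q V i fun t => by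
      simp only [Pi.sub_apply, update_self]
      ring]
    ring
  simp only [h, ← Finset.sum_mul, ← Finset.mul_sum, Finset.sum_sub_distrib, dotProduct,
    Finset.sum_const, Finset.card_univ, Fintype.card_fin, nsmul_eq_mul, mul_one]

theorem fokkerPlanck_gaussianDensity (hA : A.trace = 0) {κ D : ℝ} (hκ : κ = 2 * c * D)
    (Q V : Fin d → ℝ) :
    (∑ i, partialDeriv' i (fun Q' => V i * gaussianDensity A c Q' V) Q) +
      (∑ i, partialDeriv' i
        (fun V' => ((A *ᵥ V') i - κ * (V' i - (A *ᵥ Q) i)) * gaussianDensity A c Q V') V)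
      = D * ∑ i, partialDeriv' i (fun V' => partialDeriv' i (gaussianDensity A c Q) V') V := by
  rw [sum_partialDeriv'_transport, sum_partialDeriv'_drift,
    sum_partialDeriv'_partialDeriv'_gaussianDensity_snd, hA, sub_dotProduct (A *ᵥ V),
    smul_dotProduct, smul_eq_mul, dotProduct_comm (A *ᵥ V), hκ]
  ring

end Density

theorem stationary_fokker_planck_inertial_langevin_general
    (d : ℕ)
    (A : Matrix (Fin d) (Fin d) ℝ) (hA : A.trace = 0)
    (M β γ σ : ℝ) (hM : 0 < M)
    (hfd : γ = σ ^ 2 * β / 2)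
    (ρ : (Fin d → ℝ) → (Fin d → ℝ) → ℝ)
    (hρ : ∀ Q V : Fin d → ℝ,
      ρ Q V = Real.exp (-(β * M / 2) * ∑ i, (V i - A.mulVec Q i) ^ 2)) :
    ∀ Q V : Fin d → ℝ,
      (∑ i, partialDeriv' i (fun Q' => V i * ρ Q' V) Q) +
      (∑ i, partialDeriv' i
          (fun V' => (A.mulVec V' i - γ / M * (V' i - A.mulVec Q i)) * ρ Q V') V)
      = σ ^ 2 / (2 * M ^ 2) *
          ∑ i, partialDeriv' i (fun V' => partialDeriv' i (fun V'' => ρ Q V'') V') V := by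
  obtain rfl : ρ = gaussianDensity A (β * M / 2) := by
    ext Q V
    simp only [hρ, gaussianDensity, dotProduct, Pi.sub_apply, sq]
  refine fokkerPlanck_gaussianDensity A _ hA ?_
  rw [hfd]
  field_simp

/-- If `tr A = 0` and the fluctuation–dissipation relation `γ = σ²β/2` holds, then
`ρ(Q,V) = exp(−(βM/2)|V − AQ|²)` is a stationary solution of the Fokker–Planck equation
of the nonequilibrium Langevin dynamics `dQ = V dt`, `M dV = M A V dt − γ(V − AQ) dt + σ dW`:
`∑ᵢ ∂/∂Qᵢ (Vᵢ ρ) + ∑ᵢ ∂/∂Vᵢ ([(A V)ᵢ − (γ/M)(V − AQ)ᵢ] ρ) = (σ²/(2M²)) ∑ᵢ ∂²ρ/∂Vᵢ²`. -/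
theorem stationary_fokker_planck_inertial_langevin
    (d : ℕ) (hd : 1 ≤ d)
    (A : Matrix (Fin d) (Fin d) ℝ) (hA : A.trace = 0)
    (M β γ σ : ℝ) (hM : 0 < M) (hβ : 0 < β) (hγ : 0 < γ) (hσ : 0 < σ)
    (hfd : γ = σ ^ 2 * β / 2)
    (ρ : (Fin d → ℝ) → (Fin d → ℝ) → ℝ)
    (hρ : ∀ Q V : Fin d → ℝ,
      ρ Q V = Real.exp (-(β * M / 2) * ∑ i, (V i - A.mulVec Q i) ^ 2)) :
    ∀ Q V : Fin d → ℝ,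
      (∑ i, partialDeriv' i (fun Q' => V i * ρ Q' V) Q) +
      (∑ i, partialDeriv' i
          (fun V' => (A.mulVec V' i - γ / M * (V' i - A.mulVec Q i)) * ρ Q V') V)
      = σ ^ 2 / (2 * M ^ 2) *
          ∑ i, partialDeriv' i (fun V' => partialDeriv' i (fun V'' => ρ Q V'') V') V :=
  stationary_fokker_planck_inertial_langevin_general d A hA M β γ σ hM hfd ρ hρ
end

section
/- Let A : ℝ^d → ℝ^d be linear with operator norm ‖A‖, let w ∈ ℝ^d, and let q : [0,∞) → ℝ^d be differentiable with q'(t) = A q(t) + w for all t ≥ 0. Then for all t ≥ 0, |q(t)|² ≥ (|q(0)|² + |w|²/(2‖A‖+1)) e^{−(2‖A‖+1) t} − |w|²/(2‖A‖+1); in particular |q(t)|² ≥ |q(0)|² e^{−(2‖A‖+1) t} − |w|². -/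
/-!
Along the flow `q' = A q + w` one has `d/dt ‖q‖² = 2 ⟪q, A q + w⟫ ≥ -(2‖A‖ + 1) ‖q‖² - ‖w‖²`,
by Cauchy–Schwarz and `2 ‖q‖ ‖w‖ ≤ ‖q‖² + ‖w‖²`. Grönwall's inequality applied to `-‖q‖²`
turns this differential inequality into the exponential lower bound.
-/

open Real Set

/-- The left-hand side is the solution of `g' = -c g - ε` with `g 0 = f 0`. -/
theorem le_of_hasDerivAt_of_neg_mul_sub_le {f f' : ℝ → ℝ} {c ε : ℝ} (hc : c ≠ 0)
    (hf : ∀ t, 0 ≤ t → HasDerivAt f (f' t) t) (bound : ∀ t, 0 ≤ t → -c * f t - ε ≤ f' t)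
    {t : ℝ} (ht : 0 ≤ t) :
    (f 0 + ε / c) * exp (-c * t) - ε / c ≤ f t := by
  have hgronwall : -f t ≤ gronwallBound (-f 0) (-c) ε (t - 0) :=
    le_gronwallBound_of_liminf_deriv_right_le (f' := fun s => -f' s)
      (fun s hs => (hf s hs.1).continuousAt.continuousWithinAt.neg)
      (fun s hs _ hr => (hf s hs.1).neg.hasDerivWithinAt.liminf_right_slope_le hr)
      le_rfl (fun s hs => by rw [Pi.neg_apply]; linarith [bound s hs.1]) t ⟨ht, le_rfl⟩
  rw [gronwallBound_of_K_ne_0 (neg_ne_zero.mpr hc), sub_zero, div_neg] at hgronwall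
  linarith

section InnerProductSpace

variable {E : Type*} [NormedAddCommGroup E] [InnerProductSpace ℝ E]

theorem neg_mul_sq_norm_sub_le_two_mul_inner (A : E →L[ℝ] E) (w x : E) :
    -(2 * ‖A‖ + 1) * ‖x‖ ^ 2 - ‖w‖ ^ 2 ≤ 2 * inner ℝ x (A x + w) := by
  have hAx : -(‖A‖ * ‖x‖ ^ 2) ≤ inner ℝ x (A x) := by
    have hcs := (abs_real_inner_le_norm x (A x)).trans
      (mul_le_mul_of_nonneg_left (A.le_opNorm x) (norm_nonneg x))
    nlinarith [neg_abs_le (inner ℝ x (A x))]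
  have hw : -(‖x‖ * ‖w‖) ≤ inner ℝ x w := by
    linarith [neg_abs_le (inner ℝ x w), abs_real_inner_le_norm x w]
  rw [inner_add_right]
  nlinarith [sq_nonneg (‖x‖ - ‖w‖)]

theorem sq_norm_lower_bound_of_hasDerivAt_eq_add (A : E →L[ℝ] E) (w : E) {q : ℝ → E}
    (hq : ∀ t, 0 ≤ t → HasDerivAt q (A (q t) + w) t) {t : ℝ} (ht : 0 ≤ t) :
    (‖q 0‖ ^ 2 + ‖w‖ ^ 2 / (2 * ‖A‖ + 1)) * exp (-(2 * ‖A‖ + 1) * t)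
      - ‖w‖ ^ 2 / (2 * ‖A‖ + 1) ≤ ‖q t‖ ^ 2 :=
  le_of_hasDerivAt_of_neg_mul_sub_le (f := (‖q ·‖ ^ 2)) (by positivity)
    (fun s hs => (hq s hs).norm_sq)
    (fun s _ => neg_mul_sq_norm_sub_le_two_mul_inner A w (q s)) ht

end InnerProductSpace

/-- Lower bound on the distance to the origin of a bath atom trajectory
`q'(t) = A q(t) + w` with constant relative velocity `w`:
`|q(t)|² ≥ (|q(0)|² + |w|²/(2‖A‖+1)) e^{−(2‖A‖+1)t} − |w|²/(2‖A‖+1)`, and in particular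
`|q(t)|² ≥ |q(0)|² e^{−(2‖A‖+1)t} − |w|²`, for all `t ≥ 0`. -/
theorem bath_atom_position_lower_bound
    (d : ℕ)
    (A : EuclideanSpace ℝ (Fin d) →L[ℝ] EuclideanSpace ℝ (Fin d))
    (w : EuclideanSpace ℝ (Fin d))
    (q : ℝ → EuclideanSpace ℝ (Fin d))
    (hq : ∀ t : ℝ, 0 ≤ t → HasDerivAt q (A (q t) + w) t) :
    ∀ t : ℝ, 0 ≤ t →
      (‖q 0‖ ^ 2 + ‖w‖ ^ 2 / (2 * ‖A‖ + 1)) * Real.exp (-(2 * ‖A‖ + 1) * t)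
          - ‖w‖ ^ 2 / (2 * ‖A‖ + 1) ≤ ‖q t‖ ^ 2 ∧
      ‖q 0‖ ^ 2 * Real.exp (-(2 * ‖A‖ + 1) * t) - ‖w‖ ^ 2 ≤ ‖q t‖ ^ 2 := by
  intro t ht
  have hbound := sq_norm_lower_bound_of_hasDerivAt_eq_add A w hq ht
  refine ⟨hbound, le_trans ?_ hbound⟩
  have hc : 1 ≤ 2 * ‖A‖ + 1 := by linarith [norm_nonneg A]
  have hK : ‖w‖ ^ 2 / (2 * ‖A‖ + 1) ≤ ‖w‖ ^ 2 := div_le_self (by positivity) hc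
  have hexp : 0 ≤ ‖w‖ ^ 2 / (2 * ‖A‖ + 1) * exp (-(2 * ‖A‖ + 1) * t) := by positivity
  linarith
end

section
/- For any two points (Q,V) and (Q',V') in ℝ^d × ℝ^d satisfying |V| + ‖A‖(|Q| + R) ≤ c and |V'| + ‖A‖(|Q'| + R) ≤ c, the jump intensities coincide: Λ(Q,V) = Λ(Q',V'). In other words, when tr A = 0 the total jump rate of the Markov approximation is independent of the position and velocity of the large particle on this region. -/
/-!
For `|V| + ‖A‖(|Q| + R) ≤ c` one has `a(n) ≤ c` on the whole sphere, so the truncation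
`max (c - a(n)) 0` is inactive and the affine substitution `w = k V̂ + a(n)`,
`k = (M + m)/(2m)`, turns the inner integral into `α - β a(n)`, with constants given by the zeroth and first moments of the scaled
density on `(c, ∞)`. Since `a(n) = ⟪V - A Q, n⟫ + R ⟪A n, n⟫`, the only dependence on the state
is through the linear function `n ↦ ⟪V - A Q, n⟫`, which integrates to zero over the sphere by
antipodal symmetry.
-/

open MeasureTheory Metric Set
open scoped RealInnerProductSpace Pointwise

section Moments

variable {f : ℝ → ℝ} {μ : Measure ℝ}

theorem integrable_of_integrable_one_add_abs_mul
    (hf : Integrable (fun x => (1 + |x|) * f x) μ) : Integrable f μ := by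
  have hpos : ∀ x : ℝ, 0 < 1 + |x| := fun x => by positivity
  refine (hf.bdd_mul (c := 1) (f := fun x => (1 + |x|)⁻¹)
    ((continuous_const.add continuous_abs).inv₀ fun x => (hpos x).ne').aestronglyMeasurable
    (ae_of_all _ fun x => ?_)).congr (ae_of_all _ fun x => ?_)
  · rw [norm_inv, Real.norm_of_nonneg (hpos x).le]
    exact inv_le_one_of_one_le₀ (le_add_of_nonneg_right (abs_nonneg x))
  · exact inv_mul_cancel_left₀ (hpos x).ne' (f x)

theorem integrable_mul_of_integrable_one_add_abs_mul
    (hf : Integrable (fun x => (1 + |x|) * f x) μ) : Integrable (fun x => x * f x) μ := by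
  have hpos : ∀ x : ℝ, 0 < 1 + |x| := fun x => by positivity
  refine (hf.bdd_mul (c := 1) (f := fun x => x / (1 + |x|))
    (continuous_id.div (continuous_const.add continuous_abs)
      fun x => (hpos x).ne').aestronglyMeasurable
    (ae_of_all _ fun x => ?_)).congr (ae_of_all _ fun x => ?_)
  · rw [norm_div, Real.norm_of_nonneg (hpos x).le, div_le_one (hpos x), Real.norm_eq_abs]
    linarith
  · field_simp [(hpos x).ne']

end Moments

theorem integral_Ioi_comp_mul_add (g : ℝ → ℝ) {k : ℝ} (hk : 0 < k) (a t : ℝ) :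
    ∫ x in Ioi t, g (k * x + a) = k⁻¹ * ∫ w in Ioi (k * t + a), g w := by
  rw [integral_comp_mul_left_Ioi (fun y => g (y + a)) t hk, smul_eq_mul,
    ← (measurePreserving_add_right volume a).setIntegral_preimage_emb
      (measurableEmbedding_addRight a) g (Ioi (k * t + a)),
    preimage_add_const_Ioi, add_sub_cancel_right]

theorem setIntegral_Ici_mul_comp_mul_add {G : ℝ → ℝ} {c k : ℝ} (hk : 0 < k)
    (hG : IntegrableOn G (Ioi c)) (hG' : IntegrableOn (fun w => w * G w) (Ioi c)) (C a : ℝ) :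
    ∫ x in Ici (k⁻¹ * (c - a)), C * x * G (k * x + a)
      = C * k⁻¹ ^ 2 * ((∫ w in Ioi c, w * G w) - a * ∫ w in Ioi c, G w) :=
  calc ∫ x in Ici (k⁻¹ * (c - a)), C * x * G (k * x + a)
      = ∫ x in Ioi (k⁻¹ * (c - a)), (fun w => C * k⁻¹ * ((w - a) * G w)) (k * x + a) := by
        rw [integral_Ici_eq_integral_Ioi]
        congr with x
        field_simp
        ring
    _ = k⁻¹ * ∫ w in Ioi c, C * k⁻¹ * ((w - a) * G w) := by
        rw [integral_Ioi_comp_mul_add (fun w => C * k⁻¹ * ((w - a) * G w)) hk,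
          mul_inv_cancel_left₀ hk.ne', sub_add_cancel]
    _ = C * k⁻¹ ^ 2 * ((∫ w in Ioi c, w * G w) - a * ∫ w in Ioi c, G w) := by
        simp_rw [sub_mul]
        rw [integral_const_mul, integral_sub hG' (hG.const_mul a), integral_const_mul]
        ring

section Sphere

variable {E : Type*} [NormedAddCommGroup E] [MeasurableSpace E] [BorelSpace E]

theorem MeasureTheory.Measure.measurePreserving_neg_toSphere [NormedSpace ℝ E] (μ : Measure E)
    [μ.IsNegInvariant] :
    MeasurePreserving (Neg.neg : sphere (0 : E) 1 → sphere (0 : E) 1) μ.toSphere μ.toSphere := by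
  refine ⟨continuous_neg.measurable, Measure.ext fun s hs => ?_⟩
  have himage : ((↑) '' (Neg.neg ⁻¹' s) : Set E) = -((↑) '' s) := by
    ext x
    constructor
    · rintro ⟨n, hn, rfl⟩
      exact ⟨-n, hn, rfl⟩
    · rintro ⟨n, hn, hx⟩
      exact ⟨-n, by rwa [mem_preimage, neg_neg], by rw [coe_neg_sphere, hx, neg_neg]⟩
  rw [Measure.map_apply continuous_neg.measurable hs, μ.toSphere_apply' (continuous_neg.measurable hs),
    μ.toSphere_apply' hs, himage, Set.smul_neg, measure_neg]

variable [InnerProductSpace ℝ E] (μ : Measure E)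

theorem integral_inner_toSphere_eq_zero [μ.IsNegInvariant] (u : E) :
    ∫ n, ⟪u, (n : E)⟫ ∂μ.toSphere = 0 := by
  have h := (μ.measurePreserving_neg_toSphere).integral_comp
    (Homeomorph.neg _).measurableEmbedding fun n => ⟪u, (n : E)⟫
  simp only [coe_neg_sphere, inner_neg_right, integral_neg] at h
  linarith

theorem integral_sub_mul_inner_toSphere [FiniteDimensional ℝ E] [μ.IsAddHaarMeasure]
    {g : sphere (0 : E) 1 → ℝ} (hg : Integrable g μ.toSphere) (β : ℝ) (u : E) :
    ∫ n, (g n - β * ⟪u, (n : E)⟫) ∂μ.toSphere = ∫ n, g n ∂μ.toSphere := by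
  have hinner : Integrable (fun n : sphere (0 : E) 1 => ⟪u, (n : E)⟫) μ.toSphere :=
    (continuous_const.inner continuous_subtype_val).integrable_of_hasCompactSupport
      (.of_compactSpace _)
  rw [integral_sub hg (hinner.const_mul β), integral_const_mul,
    integral_inner_toSphere_eq_zero, mul_zero, sub_zero]

end Sphere

section Collision

variable {E : Type*} [NormedAddCommGroup E] [InnerProductSpace ℝ E] (A : E →L[ℝ] E)

theorem inner_sub_apply_sub_smul (Q V n : E) (R : ℝ) :
    ⟪V - A (Q - R • n), n⟫ = ⟪V - A Q, n⟫ + R * ⟪A n, n⟫ := by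
  simp only [map_sub, map_smul, inner_sub_left, inner_smul_left, RCLike.conj_to_real]
  ring

theorem inner_sub_apply_sub_smul_le {Q V n : E} {R c : ℝ} (hR : 0 ≤ R) (hn : ‖n‖ = 1)
    (h : ‖V‖ + ‖A‖ * (‖Q‖ + R) ≤ c) : ⟪V - A (Q - R • n), n⟫ ≤ c :=
  calc ⟪V - A (Q - R • n), n⟫ ≤ ‖V - A (Q - R • n)‖ := by
        simpa [hn] using real_inner_le_norm (V - A (Q - R • n)) n
    _ ≤ ‖V‖ + ‖A‖ * ‖Q - R • n‖ := (norm_sub_le _ _).trans (by gcongr; exact A.le_opNorm _)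
    _ ≤ ‖V‖ + ‖A‖ * (‖Q‖ + R) := by
        gcongr
        simpa [norm_smul, hn, abs_of_nonneg hR] using norm_sub_le Q (R • n)
    _ ≤ c := h

end Collision

theorem jump_intensity_independent_of_state_general
    (d : ℕ)
    (A : EuclideanSpace ℝ (Fin d) →L[ℝ] EuclideanSpace ℝ (Fin d))
    (m M lam R c : ℝ)
    (hm : 0 < m) (hM : 0 < M) (hR : 0 < R)
    (f1 : ℝ → ℝ)
    (hf1_int : Integrable (fun x => (1 + |x|) * f1 x))
    (Λ : EuclideanSpace ℝ (Fin d) → EuclideanSpace ℝ (Fin d) → ℝ)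
    (hΛ : ∀ Q V : EuclideanSpace ℝ (Fin d),
      Λ Q V =
        ∫ n, (∫ Vh in Set.Ici ((2 * m / (M + m)) *
            max (c - ⟪V - A (Q - R • (n : EuclideanSpace ℝ (Fin d))),
                      (n : EuclideanSpace ℝ (Fin d))⟫) 0),
          (m ^ (-(1 : ℝ) / 2) * lam) * R ^ (d - 1) * ((M + m) / (2 * m)) ^ 2 * Vh *
            (m ^ ((1 : ℝ) / 2) *
              f1 (m ^ ((1 : ℝ) / 2) * ((M + m) / (2 * m) * Vh +
                ⟪V - A (Q - R • (n : EuclideanSpace ℝ (Fin d))),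
                  (n : EuclideanSpace ℝ (Fin d))⟫))))
          ∂((volume : Measure (EuclideanSpace ℝ (Fin d))).toSphere)) :
    ∀ Q V Q' V' : EuclideanSpace ℝ (Fin d),
      ‖V‖ + ‖A‖ * (‖Q‖ + R) ≤ c → ‖V'‖ + ‖A‖ * (‖Q'‖ + R) ≤ c →
      Λ Q V = Λ Q' V' := by
  intro Q V Q' V' hQV hQV'
  set s := m ^ ((1 : ℝ) / 2)
  set k := (M + m) / (2 * m)
  set C := (m ^ (-(1 : ℝ) / 2) * lam) * R ^ (d - 1) * k ^ 2
  set G : ℝ → ℝ := fun w => s * f1 (s * w)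
  have hs : s ≠ 0 := (Real.rpow_pos_of_pos hm _).ne'
  have hk : 0 < k := by positivity
  have hG : Integrable G :=
    ((integrable_of_integrable_one_add_abs_mul hf1_int).comp_mul_left' hs).const_mul s
  have hG' : Integrable fun w => w * G w :=
    ((integrable_mul_of_integrable_one_add_abs_mul hf1_int).comp_mul_left' hs).congr
      (ae_of_all _ fun w => by simp only [G]; ring)
  set I₁ := ∫ w in Ioi c, w * G w
  set I₀ := ∫ w in Ioi c, G w
  suffices key : ∀ Q V : EuclideanSpace ℝ (Fin d), ‖V‖ + ‖A‖ * (‖Q‖ + R) ≤ c →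
      Λ Q V = ∫ n, C * k⁻¹ ^ 2 * (I₁ - R * ⟪A n, n⟫ * I₀)
        ∂((volume : Measure (EuclideanSpace ℝ (Fin d))).toSphere) from
    (key Q V hQV).trans (key Q' V' hQV').symm
  intro Q V hQV
  have hpt : ∀ n : sphere (0 : EuclideanSpace ℝ (Fin d)) 1,
      ∫ Vh in Ici (2 * m / (M + m) * max (c - ⟪V - A (Q - R • (n : _)), n⟫) 0),
        C * Vh * G (k * Vh + ⟪V - A (Q - R • (n : _)), n⟫)
      = C * k⁻¹ ^ 2 * (I₁ - R * ⟪A n, n⟫ * I₀) - C * k⁻¹ ^ 2 * I₀ * ⟪V - A Q, n⟫ := by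
    intro n
    have hac := inner_sub_apply_sub_smul_le A hR.le (norm_eq_of_mem_sphere n) hQV
    rw [max_eq_left (sub_nonneg.2 hac), show 2 * m / (M + m) = k⁻¹ from (inv_div _ _).symm,
      setIntegral_Ici_mul_comp_mul_add hk hG.integrableOn hG'.integrableOn,
      inner_sub_apply_sub_smul]
    ring
  have hcont : Continuous fun n : sphere (0 : EuclideanSpace ℝ (Fin d)) 1 =>
      C * k⁻¹ ^ 2 * (I₁ - R * ⟪A n, n⟫ * I₀) := by fun_prop
  rw [hΛ, integral_congr_ae (ae_of_all _ hpt),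
    integral_sub_mul_inner_toSphere _ (hcont.integrable_of_hasCompactSupport (.of_compactSpace _))]

/-- When `tr A = 0`, the total jump intensity `Λ` of the Markov approximation is
independent of the position and velocity of the large particle on the region
`|V| + ‖A‖(|Q| + R) ≤ c`. -/
theorem jump_intensity_independent_of_state
    (d : ℕ) (hd : 1 ≤ d)
    (A : EuclideanSpace ℝ (Fin d) →L[ℝ] EuclideanSpace ℝ (Fin d))
    (hA : LinearMap.trace ℝ (EuclideanSpace ℝ (Fin d))
      (A : EuclideanSpace ℝ (Fin d) →ₗ[ℝ] EuclideanSpace ℝ (Fin d)) = 0)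
    (m M lam R c : ℝ)
    (hm : 0 < m) (hM : 0 < M) (hlam : 0 < lam) (hR : 0 < R) (hc : 0 < c)
    (f1 : ℝ → ℝ) (hf1_nonneg : ∀ x, 0 ≤ f1 x)
    (hf1_int : Integrable (fun x => (1 + |x|) * f1 x))
    (Λ : EuclideanSpace ℝ (Fin d) → EuclideanSpace ℝ (Fin d) → ℝ)
    (hΛ : ∀ Q V : EuclideanSpace ℝ (Fin d),
      Λ Q V =
        ∫ n, (∫ Vh in Set.Ici ((2 * m / (M + m)) *
            max (c - ⟪V - A (Q - R • (n : EuclideanSpace ℝ (Fin d))),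
                      (n : EuclideanSpace ℝ (Fin d))⟫) 0),
          (m ^ (-(1 : ℝ) / 2) * lam) * R ^ (d - 1) * ((M + m) / (2 * m)) ^ 2 * Vh *
            (m ^ ((1 : ℝ) / 2) *
              f1 (m ^ ((1 : ℝ) / 2) * ((M + m) / (2 * m) * Vh +
                ⟪V - A (Q - R • (n : EuclideanSpace ℝ (Fin d))),
                  (n : EuclideanSpace ℝ (Fin d))⟫))))
          ∂((volume : Measure (EuclideanSpace ℝ (Fin d))).toSphere)) :
    ∀ Q V Q' V' : EuclideanSpace ℝ (Fin d),
      ‖V‖ + ‖A‖ * (‖Q‖ + R) ≤ c → ‖V'‖ + ‖A‖ * (‖Q'‖ + R) ≤ c →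
      Λ Q V = Λ Q' V' :=
  jump_intensity_independent_of_state_general d A m M lam R c hm hM hR f1 hf1_int Λ hΛ
end

section
/- lim_{m→0⁺} C_m I₂(m) = (4 λ R^{d−1} S_{d−1} Φ₃/(M² d)) Id, where Id is the d×d identity matrix. This identifies the isotropic diffusion coefficient D = σ²/M² with σ² = (4 λ R^{d−1} S_{d−1}/d) Φ₃ of the limiting nonequilibrium Langevin dynamics M dV = −γ(V − AQ) dt + σ dW. -/
/-!
The substitution `w = ((M + m) / (2 √m)) V̂ + √m a(n)` turns the inner integral of `I₂(m)` into
`16 / (M + m)⁴ · ∫_{t}^∞ (w - √m a(n))³ f¹(w) dw` with `t = max (m^{3/10}) (√m a(n))`.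
The lower limit and the shift are jointly continuous in `(m, n) ∈ ℝ × S^{d-1}` and vanish at
`m = 0`, so by compactness of the sphere the outer integral is continuous in `m` and tends to
`(16 / M⁴) (∫_0^∞ w³ f¹) ∫ nᵢ nⱼ dσ = (16 / M⁴) Φ₃ δᵢⱼ S_{d-1} / d`. For the last integral,
coordinate reflections kill the off-diagonal terms and coordinate swaps make the diagonal ones
equal, while they sum to `σ(S^{d-1})`.
-/

open MeasureTheory Set Metric Filter Topology
open scoped RealInnerProductSpace Pointwise

theorem continuous_integral_Ici {f : ℝ → ℝ} (hf : Integrable f) :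
    Continuous fun t => ∫ x in Ici t, f x :=
  continuous_iff_continuousAt.2 fun t =>
    (hf.integrableOn.continuousOn_Ici_primitive_Ici (a₀ := t - 1)).continuousAt
      (Ici_mem_nhds (by linarith))

theorem integrable_pow_mul_of_abs_pow_mul {f : ℝ → ℝ} (hf : Integrable f) {k : ℕ}
    (hk : Integrable fun x => |x| ^ k * f x) : Integrable fun x => x ^ k * f x :=
  hk.mono ((continuous_pow k).aestronglyMeasurable.mul hf.aestronglyMeasurable)
    (ae_of_all _ fun x => by simp)

noncomputable def tailMoment (f : ℝ → ℝ) (n : ℕ) (t s : ℝ) : ℝ :=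
  ∫ x in Ici t, (x - s) ^ n * f x

theorem continuous_tailMoment {f : ℝ → ℝ} {n : ℕ}
    (hf : ∀ k ≤ n, Integrable fun x => x ^ k * f x) :
    Continuous (Function.uncurry (tailMoment f n)) := by
  have hf' : ∀ k ∈ Finset.range (n + 1), Integrable fun x => x ^ k * f x :=
    fun k hk => hf k (Nat.lt_succ_iff.1 (Finset.mem_range.1 hk))
  have hexpand : ∀ t s, tailMoment f n t s = ∑ k ∈ Finset.range (n + 1),
      (∫ x in Ici t, x ^ k * f x) * ((-s) ^ (n - k) * n.choose k) := by
    intro t s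
    simp_rw [tailMoment, sub_eq_add_neg, add_pow, Finset.sum_mul]
    rw [integral_finsetSum _ fun k hk => ((hf' k hk).integrableOn.mul_const
      ((-s) ^ (n - k) * n.choose k)).congr (ae_of_all _ fun x => by ring)]
    refine Finset.sum_congr rfl fun k _ => ?_
    rw [← integral_mul_const]
    congr 1 with x
    ring
  simp_rw [Function.uncurry_def, hexpand]
  exact continuous_finsetSum _ fun k hk =>
    ((continuous_integral_Ici (hf' k hk)).comp continuous_fst).mul (by fun_prop)

theorem tailMoment_zero_zero_of_even {f : ℝ → ℝ} (hf : ∀ x, f (-x) = f x) (k : ℕ) :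
    tailMoment f k 0 0 = (1 / 2) * ∫ x, |x| ^ k * f x := by
  have habs : ∀ x, |x| ^ k * f x = |x| ^ k * f |x| := fun x => by
    rcases abs_choice x with h | h <;> simp [h, hf]
  simp_rw [tailMoment, sub_zero, habs, integral_comp_abs (f := fun x => x ^ k * f x),
    integral_Ici_eq_integral_Ioi]
  ring

theorem integral_Ici_comp_mul_add {E : Type*} [NormedAddCommGroup E] [NormedSpace ℝ E]
    (g : ℝ → E) (a c : ℝ) {b : ℝ} (hb : 0 < b) :
    ∫ x in Ici a, g (b * x + c) = b⁻¹ • ∫ x in Ici (b * a + c), g x := by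
  have hind : (Ici a).indicator (fun x => g (b * x + c))
      = fun x => (Ici (b * a + c)).indicator g (b * x + c) := by
    ext x
    simp only [indicator, mem_Ici, add_le_add_iff_right, mul_le_mul_iff_right₀ hb]
  rw [← integral_indicator measurableSet_Ici, ← integral_indicator measurableSet_Ici, hind,
    Measure.integral_comp_mul_left (fun y => (Ici (b * a + c)).indicator g (y + c)),
    integral_add_right_eq_self, abs_of_pos (inv_pos.2 hb)]

-- The lower limit is written as `max (m^{3/10}) (√m α)`, not `√m · max (m^{-1/5}) α`, so that
-- it is continuous at `m = 0`.
theorem integral_Ici_collision_eq_tailMoment {M m : ℝ} (hM : 0 < M) (hm : 0 < m) (α : ℝ)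
    (f : ℝ → ℝ) :
    ∫ v in Ici (2 * m / (M + m) * max (m ^ (-(1 : ℝ) / 5) - α) 0),
        m ^ (-(2 : ℝ)) * v ^ 3 *
          f ((M + m) / (2 * m ^ ((1 : ℝ) / 2)) * v + m ^ ((1 : ℝ) / 2) * α)
      = 16 / (M + m) ^ 4 *
          tailMoment f 3 (max (m ^ ((3 : ℝ) / 10)) (m ^ ((1 : ℝ) / 2) * α))
            (m ^ ((1 : ℝ) / 2) * α) := by
  set r := m ^ ((1 : ℝ) / 2)
  have hr : 0 < r := Real.rpow_pos_of_pos hm _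
  have hrr : r * r = m := by rw [← Real.rpow_add hm]; norm_num
  have hrc : r * m ^ (-(1 : ℝ) / 5) = m ^ ((3 : ℝ) / 10) := by
    rw [← Real.rpow_add hm]; norm_num
  have hm2 : m ^ (-(2 : ℝ)) = (r ^ 4)⁻¹ := by
    rw [Real.rpow_neg hm.le, Real.rpow_two, ← hrr]; ring
  set β := (M + m) / (2 * r) with hβ
  have hβ0 : 0 < β := by positivity
  have hlow : β * (2 * m / (M + m) * max (m ^ (-(1 : ℝ) / 5) - α) 0) + r * α
      = max (m ^ ((3 : ℝ) / 10)) (r * α) := by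
    have hβm : β * (2 * m / (M + m)) = r := by rw [hβ, ← hrr]; field_simp
    rw [← mul_assoc, hβm, ← hrc, ← mul_max_of_nonneg _ _ hr.le, ← mul_add,
      ← max_add_add_right, sub_add_cancel, zero_add]
  have hintegrand : ∀ v, m ^ (-(2 : ℝ)) * v ^ 3 * f (β * v + r * α)
      = m ^ (-(2 : ℝ)) / β ^ 3 * ((β * v + r * α - r * α) ^ 3 * f (β * v + r * α)) := by
    intro v
    field_simp
    ring
  simp_rw [hintegrand]
  rw [integral_const_mul, integral_Ici_comp_mul_add (fun x => (x - r * α) ^ 3 * f x) _ _ hβ0,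
    hlow, smul_eq_mul, ← mul_assoc, hm2, hβ, ← hrr, tailMoment]
  congr 1
  field_simp
  ring

theorem tendsto_integral_tailMoment_rescaled_mul {X : Type*} [TopologicalSpace X]
    [CompactSpace X] [MeasurableSpace X] [OpensMeasurableSpace X] {μ : Measure X}
    [IsFiniteMeasure μ] {f : ℝ → ℝ} (hf : ∀ k ≤ 3, Integrable fun x => x ^ k * f x)
    {α w : X → ℝ} (hα : Continuous α) (hw : Continuous w) :
    Tendsto (fun m => ∫ n, tailMoment f 3 (max (m ^ ((3 : ℝ) / 10)) (m ^ ((1 : ℝ) / 2) * α n))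
        (m ^ ((1 : ℝ) / 2) * α n) * w n ∂μ) (𝓝 0) (𝓝 (tailMoment f 3 0 0 * ∫ n, w n ∂μ)) := by
  have hcont : Continuous (Function.uncurry fun m n =>
      tailMoment f 3 (max (m ^ ((3 : ℝ) / 10)) (m ^ ((1 : ℝ) / 2) * α n))
        (m ^ ((1 : ℝ) / 2) * α n) * w n) := by
    have := continuous_tailMoment hf
    have := Real.continuous_rpow_const (q := (3 : ℝ) / 10) (by norm_num)
    have := Real.continuous_rpow_const (q := (1 : ℝ) / 2) (by norm_num)
    fun_prop
  have hint := continuous_parametric_integral_of_continuous (μ := μ) hcont isCompact_univ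
  simp only [Measure.restrict_univ] at hint
  convert hint.tendsto 0 using 2
  simp [integral_const_mul]

section SphereSymmetry

variable {E : Type*} [NormedAddCommGroup E] [NormedSpace ℝ E] [MeasurableSpace E] [BorelSpace E]

noncomputable def LinearIsometryEquiv.sphereHomeomorph (e : E ≃ₗᵢ[ℝ] E) :
    sphere (0 : E) 1 ≃ₜ sphere (0 : E) 1 :=
  e.toHomeomorph.subtype fun x => by simp

theorem LinearIsometryEquiv.measurePreserving_sphereHomeomorph (e : E ≃ₗᵢ[ℝ] E)
    {μ : Measure E} (he : MeasurePreserving e μ μ) :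
    MeasurePreserving e.sphereHomeomorph μ.toSphere μ.toSphere := by
  refine ⟨e.sphereHomeomorph.continuous.measurable, Measure.ext fun s hs => ?_⟩
  have hcone : Ioo (0 : ℝ) 1 • ((↑) '' (e.sphereHomeomorph ⁻¹' s) : Set E)
      = e ⁻¹' (Ioo (0 : ℝ) 1 • ((↑) '' s)) := by
    ext x
    simp only [Set.mem_smul, mem_image, mem_preimage, Subtype.exists, mem_sphere_iff_norm, sub_zero]
    constructor
    · rintro ⟨t, ht, y, ⟨y, hy, hys, rfl⟩, rfl⟩
      exact ⟨t, ht, e y, ⟨e y, by simpa using hy, hys, rfl⟩, by simp⟩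
    · rintro ⟨t, ht, z, ⟨z, hz, hzs, rfl⟩, hx⟩
      refine ⟨t, ht, e.symm z, ⟨e.symm z, by simpa using hz, ?_, rfl⟩,
        e.injective (by simp [hx])⟩
      convert hzs using 1
      exact Subtype.ext (e.apply_symm_apply z)
  rw [Measure.map_apply e.sphereHomeomorph.continuous.measurable hs,
    Measure.toSphere_apply' _ (e.sphereHomeomorph.continuous.measurable hs),
    Measure.toSphere_apply' _ hs, hcone,
    he.measure_preimage_emb e.toHomeomorph.measurableEmbedding]

theorem LinearIsometryEquiv.integral_toSphere_comp (e : E ≃ₗᵢ[ℝ] E) {μ : Measure E}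
    {F : Type*} [NormedAddCommGroup F] [NormedSpace ℝ F]
    (he : MeasurePreserving e μ μ) (f : E → F) :
    ∫ n, f (e n) ∂μ.toSphere = ∫ n, f n ∂μ.toSphere :=
  (e.measurePreserving_sphereHomeomorph he).integral_comp
    e.sphereHomeomorph.measurableEmbedding (fun n => f n)

end SphereSymmetry

section EuclideanSphere

variable {ι : Type*} [Fintype ι]

theorem EuclideanSpace.sum_sphere_coord_mul_self (n : sphere (0 : EuclideanSpace ℝ ι) 1) :
    ∑ k, (n : EuclideanSpace ℝ ι) k * (n : EuclideanSpace ℝ ι) k = 1 := by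
  have := EuclideanSpace.real_norm_sq_eq (n : EuclideanSpace ℝ ι)
  simp_all [sq]

theorem integral_toSphere_coord_mul_coord_of_ne [DecidableEq ι] {i j : ι} (hij : i ≠ j) :
    ∫ n, (n : EuclideanSpace ℝ ι) i * (n : EuclideanSpace ℝ ι) j
      ∂(volume : Measure (EuclideanSpace ℝ ι)).toSphere = 0 := by
  let e : EuclideanSpace ℝ ι ≃ₗᵢ[ℝ] EuclideanSpace ℝ ι :=
    LinearIsometryEquiv.piLpCongrRight 2
      fun k => if k = j then LinearIsometryEquiv.neg ℝ else LinearIsometryEquiv.refl ℝ ℝ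
  have he : ∀ x : EuclideanSpace ℝ ι, e x i * e x j = -(x i * x j) := fun x => by
    simp [e, LinearIsometryEquiv.piLpCongrRight_apply, hij]
  have := e.integral_toSphere_comp e.measurePreserving fun x => x i * x j
  simp only [he, integral_neg] at this
  linarith

theorem integral_toSphere_coord_mul_self_eq (i j : ι) :
    ∫ n, (n : EuclideanSpace ℝ ι) i * (n : EuclideanSpace ℝ ι) i
        ∂(volume : Measure (EuclideanSpace ℝ ι)).toSphere
      = ∫ n, (n : EuclideanSpace ℝ ι) j * (n : EuclideanSpace ℝ ι) j
        ∂(volume : Measure (EuclideanSpace ℝ ι)).toSphere := by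
  classical
  let e : EuclideanSpace ℝ ι ≃ₗᵢ[ℝ] EuclideanSpace ℝ ι :=
    LinearIsometryEquiv.piLpCongrLeft 2 ℝ ℝ (Equiv.swap i j)
  have he : ∀ x : EuclideanSpace ℝ ι, e x i = x j := fun x => by
    simp [e, LinearIsometryEquiv.piLpCongrLeft_apply]
  rw [← e.integral_toSphere_comp e.measurePreserving fun x => x i * x i]
  simp only [he]

theorem integral_toSphere_coord_mul_coord [DecidableEq ι] (i j : ι) :
    ∫ n, (n : EuclideanSpace ℝ ι) i * (n : EuclideanSpace ℝ ι) j
        ∂(volume : Measure (EuclideanSpace ℝ ι)).toSphere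
      = ((volume : Measure (EuclideanSpace ℝ ι)).toSphere univ).toReal / Fintype.card ι *
          (1 : Matrix ι ι ℝ) i j := by
  rcases eq_or_ne i j with rfl | hij
  · have hsum : ∑ k, ∫ n, (n : EuclideanSpace ℝ ι) k * (n : EuclideanSpace ℝ ι) k
          ∂(volume : Measure (EuclideanSpace ℝ ι)).toSphere
        = ((volume : Measure (EuclideanSpace ℝ ι)).toSphere univ).toReal := by
      rw [← integral_finsetSum _ fun k _ => Continuous.integrable_of_hasCompactSupport
        (by fun_prop) (HasCompactSupport.of_compactSpace _)]
      simp [EuclideanSpace.sum_sphere_coord_mul_self, Measure.real]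
    simp only [integral_toSphere_coord_mul_self_eq _ i, Finset.sum_const, Finset.card_univ,
      nsmul_eq_mul] at hsum
    have hcard : (Fintype.card ι : ℝ) ≠ 0 :=
      Nat.cast_ne_zero.2 (Fintype.card_pos_iff.2 ⟨i⟩).ne'
    rw [Matrix.one_apply_eq, ← hsum]
    field_simp
  · rw [integral_toSphere_coord_mul_coord_of_ne hij, Matrix.one_apply_ne hij, mul_zero]

end EuclideanSphere

theorem diffusion_coefficient_limit_general
    (d : ℕ)
    (M R lam : ℝ) (hM : 0 < M)
    (A : EuclideanSpace ℝ (Fin d) →L[ℝ] EuclideanSpace ℝ (Fin d))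
    (Q V : EuclideanSpace ℝ (Fin d))
    (f1 : ℝ → ℝ)
    (hf1_even : ∀ x, f1 (-x) = f1 x)
    (hf1_mom : ∀ i : ℕ, i ≤ 4 → Integrable (fun x => |x| ^ i * f1 x))
    (Φ : ℕ → ℝ) (hΦ : ∀ i : ℕ, Φ i = (1 / 2) * ∫ x, |x| ^ i * f1 x)
    (S : ℝ)
    (hS : S = ((volume : Measure (EuclideanSpace ℝ (Fin d))).toSphere Set.univ).toReal)
    (C : ℝ → ℝ) (hC : ∀ m, C m = lam * R ^ (d - 1) * ((M + m) / 2) ^ 2)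
    (I₂ : ℝ → Fin d → Fin d → ℝ)
    (hI₂ : ∀ (m : ℝ) (i j : Fin d), I₂ m i j =
      ∫ n, (∫ Vh in Set.Ici ((2 * m / (M + m)) *
            max (m ^ (-(1 : ℝ) / 5) -
              ⟪V - A (Q - R • (n : EuclideanSpace ℝ (Fin d))),
                (n : EuclideanSpace ℝ (Fin d))⟫) 0),
          m ^ (-(2 : ℝ)) * Vh ^ 3 *
            f1 ((M + m) / (2 * m ^ ((1 : ℝ) / 2)) * Vh +
              m ^ ((1 : ℝ) / 2) *
                ⟪V - A (Q - R • (n : EuclideanSpace ℝ (Fin d))),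
                  (n : EuclideanSpace ℝ (Fin d))⟫))
        * ((n : EuclideanSpace ℝ (Fin d)) i * (n : EuclideanSpace ℝ (Fin d)) j)
        ∂((volume : Measure (EuclideanSpace ℝ (Fin d))).toSphere)) :
    ∀ i j : Fin d,
      Filter.Tendsto (fun m => C m * I₂ m i j) (nhdsWithin 0 (Set.Ioi 0))
        (nhds (4 * lam * R ^ (d - 1) * S * Φ 3 / (M ^ 2 * d) *
          (1 : Matrix (Fin d) (Fin d) ℝ) i j)) := by
  intro i j
  have hmom : ∀ k ≤ 3, Integrable fun x => x ^ k * f1 x := fun k hk =>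
    integrable_pow_mul_of_abs_pow_mul (by simpa using hf1_mom 0 (by norm_num))
      (hf1_mom k (by omega))
  have hinner := tendsto_integral_tailMoment_rescaled_mul hmom
    (μ := (volume : Measure (EuclideanSpace ℝ (Fin d))).toSphere)
    (α := fun n => ⟪V - A (Q - R • (n : EuclideanSpace ℝ (Fin d))), n⟫) (by fun_prop)
    (w := fun n => (n : EuclideanSpace ℝ (Fin d)) i * (n : EuclideanSpace ℝ (Fin d)) j)
    (by fun_prop)
  have hfactor : Tendsto (fun m => C m * (16 / (M + m) ^ 4)) (𝓝 0)
      (𝓝 (C 0 * (16 / (M + 0) ^ 4))) := by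
    simp_rw [hC]
    exact ((Continuous.continuousAt (by fun_prop)).mul
      (continuousAt_const.div (by fun_prop) (by positivity))).tendsto
  have hval : C 0 * (16 / (M + 0) ^ 4) * (tailMoment f1 3 0 0 *
      ∫ n, (n : EuclideanSpace ℝ (Fin d)) i * (n : EuclideanSpace ℝ (Fin d)) j
        ∂(volume : Measure (EuclideanSpace ℝ (Fin d))).toSphere)
      = 4 * lam * R ^ (d - 1) * S * Φ 3 / (M ^ 2 * d) * (1 : Matrix (Fin d) (Fin d) ℝ) i j := by
    rw [integral_toSphere_coord_mul_coord, tailMoment_zero_zero_of_even hf1_even, ← hΦ, hC, ← hS,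
      Fintype.card_fin]
    field_simp
    ring
  rw [← hval]
  refine ((hfactor.mul hinner).mono_left nhdsWithin_le_nhds).congr'
    (eventually_mem_nhdsWithin.mono fun m hm => ?_)
  simp_rw [hI₂, integral_Ici_collision_eq_tailMoment hM hm, mul_assoc, integral_const_mul]

/-- The diffusion coefficient of the limiting nonequilibrium Langevin dynamics:
`lim_{m→0⁺} C_m I₂(m) = (4 λ R^{d−1} S_{d−1} Φ₃/(M² d)) Id` (entrywise). -/
theorem diffusion_coefficient_limit
    (d : ℕ) (hd : 1 ≤ d)
    (M R lam : ℝ) (hM : 0 < M) (hR : 0 < R) (hlam : 0 < lam)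
    (A : EuclideanSpace ℝ (Fin d) →L[ℝ] EuclideanSpace ℝ (Fin d))
    (Q V : EuclideanSpace ℝ (Fin d))
    (f1 : ℝ → ℝ) (hf1_meas : Measurable f1) (hf1_nonneg : ∀ x, 0 ≤ f1 x)
    (hf1_even : ∀ x, f1 (-x) = f1 x)
    (hf1_prob : ∫ x, f1 x = 1)
    (hf1_mom : ∀ i : ℕ, i ≤ 4 → Integrable (fun x => |x| ^ i * f1 x))
    (Φ : ℕ → ℝ) (hΦ : ∀ i : ℕ, Φ i = (1 / 2) * ∫ x, |x| ^ i * f1 x)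
    (S : ℝ)
    (hS : S = ((volume : Measure (EuclideanSpace ℝ (Fin d))).toSphere Set.univ).toReal)
    (C : ℝ → ℝ) (hC : ∀ m, C m = lam * R ^ (d - 1) * ((M + m) / 2) ^ 2)
    (I₂ : ℝ → Fin d → Fin d → ℝ)
    (hI₂ : ∀ (m : ℝ) (i j : Fin d), I₂ m i j =
      ∫ n, (∫ Vh in Set.Ici ((2 * m / (M + m)) *
            max (m ^ (-(1 : ℝ) / 5) -
              ⟪V - A (Q - R • (n : EuclideanSpace ℝ (Fin d))),
                (n : EuclideanSpace ℝ (Fin d))⟫) 0),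
          m ^ (-(2 : ℝ)) * Vh ^ 3 *
            f1 ((M + m) / (2 * m ^ ((1 : ℝ) / 2)) * Vh +
              m ^ ((1 : ℝ) / 2) *
                ⟪V - A (Q - R • (n : EuclideanSpace ℝ (Fin d))),
                  (n : EuclideanSpace ℝ (Fin d))⟫))
        * ((n : EuclideanSpace ℝ (Fin d)) i * (n : EuclideanSpace ℝ (Fin d)) j)
        ∂((volume : Measure (EuclideanSpace ℝ (Fin d))).toSphere)) :
    ∀ i j : Fin d,
      Filter.Tendsto (fun m => C m * I₂ m i j) (nhdsWithin 0 (Set.Ioi 0))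
        (nhds (4 * lam * R ^ (d - 1) * S * Φ 3 / (M ^ 2 * d) *
          (1 : Matrix (Fin d) (Fin d) ℝ) i j)) :=
  diffusion_coefficient_limit_general d M R lam hM A Q V f1 hf1_even hf1_mom Φ hΦ S hS C hC I₂ hI₂
end
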